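/- arXiv:1109.5085 — 8 statements merged into one kernel-verified Lean document; each statement's English description precedes it below -/
import Mathlib

section
/- Let $x \in (0,1)$ and $s \in \mathbb{R}$ with $s x < 2$. Define $F(z) = \frac{(1-z^2)(x^2(2+sx)z^2 + 8xz + 4 + 2x^2 - sx^3)}{4(1+xz)}$. Then $F(z) > 0$ for all $z \in (-1,1)$. -/
theorem stmt_0 (x s : ℝ) (hx0 : 0 < x) (hx1 : x < 1) (hsx : s * x < 2)
    (F : ℝ → ℝ)
    (hF : ∀ z : ℝ, F z =
      (1 - z^2) * (x^2 * (2 + s*x) * z^2 + 8*x*z + 4 + 2*x^2 - s*x^3) / (4 * (1 + x*z))) :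
    ∀ z ∈ Set.Ioo (-1 : ℝ) 1, 0 < F z := by
  intro z hz
  obtain ⟨h1, h2⟩ := hz
  rw [hF]
  have hz2 : 1 - z^2 > 0 := by nlinarith
  have h3 : 1 + x*z > 0 := by nlinarith
  have hkey : (2 - s*x) * (1 - z^2) > 0 := mul_pos (by linarith) hz2
  have hQ : x^2 * (2 + s*x) * z^2 + 8*x*z + 4 + 2*x^2 - s*x^3 > 0 := by
    nlinarith [sq_nonneg (1 + x*z), mul_pos (mul_pos hx0 hx0) hkey]
  apply div_pos
  · positivity
  · positivity
end

section
/- Let $x \in (0,1)$ and $s \in \mathbb{R}$. The function $F(z) = \frac{(1-z^2)(x^2(2+sx)z^2 + 8xz + 4 + 2x^2 - sx^3)}{4(1+xz)}$ satisfies, for all $z \in (-1,1)$, the ODE $F''(z) = 2sx + \frac{4\alpha_1}{\alpha_0}\left(a^2 - \frac{b^2 x^4}{(1+xz)^4}\right)(1+xz) - \frac{\alpha_2}{\alpha_0}(1+xz)$, where $\frac{\alpha_1}{\alpha_0} = \frac{-(1-x^2)^2(2-sx)}{8 b^2 x^4}$ and $\frac{\alpha_2}{\alpha_0} = \frac{3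 b^2 x^4 (2+sx) - a^2 (2-sx)(1-x^2)^2}{2 b^2 x^4}$, for any real $a$ and any nonzero real $b$. -/
theorem stmt_5 (x s a b : ℝ) (hx0 : 0 < x) (hx1 : x < 1) (hb : b ≠ 0)
    (F : ℝ → ℝ)
    (hF : ∀ z : ℝ, F z =
      (1 - z^2) * (x^2 * (2 + s*x) * z^2 + 8*x*z + 4 + 2*x^2 - s*x^3) / (4 * (1 + x*z)))
    (r1 r2 : ℝ)
    (hr1 : r1 = -(1 - x^2)^2 * (2 - s*x) / (8 * b^2 * x^4))
    (hr2 : r2 = (3 * b^2 * x^4 * (2 + s*x) - a^2 * (2 - s*x) * (1 - x^2)^2) / (2 * b^2 * x^4)) :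
    ∀ z ∈ Set.Ioo (-1 : ℝ) 1,
      deriv (deriv F) z =
        2*s*x + 4*r1 * (a^2 - b^2 * x^4 / (1 + x*z)^4) * (1 + x*z) - r2 * (1 + x*z) := by
  intro z hz
  obtain ⟨hz1, hz2⟩ := hz
  have hx : x ≠ 0 := ne_of_gt hx0
  set c : ℝ := (1 - x^2)^2 * (2 - s*x) / x^2 with hc
  set q3 : ℝ := -(2*x + s*x^2) with hq3
  set q2 : ℝ := s*x - 6 with hq2
  set q1 : ℝ := 2*s*x^2 - s + 2/x with hq1
  set q0 : ℝ := 8 - 2*s*x + s/x - 2/x^2 with hq0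
  set G : ℝ → ℝ := fun w => (3*q3*w^2 + 2*q2*w + q1)/4 - c*x/(4*(1+x*w)^2) with hG
  have hUopen : IsOpen {w : ℝ | 1 + x*w ≠ 0} := by
    have hcont : Continuous (fun w : ℝ => 1 + x*w) := by continuity
    exact isOpen_compl_singleton.preimage hcont
  have huz : 1 + x*z ≠ 0 := by
    have h1 : -1 < x*z := by nlinarith
    linarith
  have hnhds : {w : ℝ | 1 + x*w ≠ 0} ∈ nhds z := hUopen.mem_nhds huz
  have hFalt : ∀ w : ℝ, 1 + x*w ≠ 0 →
      F w = (q3*w^3 + q2*w^2 + q1*w + q0)/4 + c/(4*(1+x*w)) := by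
    intro w hw
    rw [hF w, hc, hq3, hq2, hq1, hq0]
    have hw' : 1 + w*x ≠ 0 := by rwa [mul_comm]
    field_simp
    ring
  have hder1 : ∀ w : ℝ, 1 + x*w ≠ 0 → HasDerivAt F (G w) w := by
    intro w hw
    have hpoly : HasDerivAt (fun t : ℝ => (q3*t^3 + q2*t^2 + q1*t + q0)/4)
        ((3*q3*w^2 + 2*q2*w + q1)/4) w := by
      have h3 : HasDerivAt (fun t : ℝ => t^3) (3*w^2) w := by
        simpa using hasDerivAt_pow 3 w
      have h2 : HasDerivAt (fun t : ℝ => t^2) (2*w) w := by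
        simpa using hasDerivAt_pow 2 w
      have h1 : HasDerivAt (fun t : ℝ => t) 1 w := hasDerivAt_id w
      have h := (((h3.const_mul q3).add (h2.const_mul q2)).add (h1.const_mul q1)).add_const q0
      have h' := h.div_const 4
      refine h'.congr_deriv ?_
      ring
    have hden : HasDerivAt (fun t : ℝ => 4*(1+x*t)) (4*x) w := by
      have h1 : HasDerivAt (fun t : ℝ => 1 + x*t) x w := by
        simpa using ((hasDerivAt_id w).const_mul x).const_add 1
      simpa [mul_comm] using h1.const_mul 4
    have hden0 : (4:ℝ)*(1+x*w) ≠ 0 := mul_ne_zero (by norm_num) hw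
    have hfrac : HasDerivAt (fun t : ℝ => c/(4*(1+x*t)))
        ((0 * (4*(1+x*w)) - c * (4*x)) / (4*(1+x*w))^2) w :=
      (hasDerivAt_const w c).div hden hden0
    have hsum := hpoly.add hfrac
    have heq : F =ᶠ[nhds w] (fun t => (q3*t^3 + q2*t^2 + q1*t + q0)/4 + c/(4*(1+x*t))) := by
      filter_upwards [hUopen.mem_nhds hw] with t ht using hFalt t ht
    have hres := hsum.congr_of_eventuallyEq heq
    refine hres.congr_deriv ?_
    rw [hG]
    field_simp
    ring
  have hdF : deriv F =ᶠ[nhds z] G := by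
    filter_upwards [hnhds] with w hw using (hder1 w hw).deriv
  have hder2 : HasDerivAt G ((6*q3*z + 2*q2)/4 + c*x^2/(2*(1+x*z)^3)) z := by
    have hpoly : HasDerivAt (fun t : ℝ => (3*q3*t^2 + 2*q2*t + q1)/4)
        ((6*q3*z + 2*q2)/4) z := by
      have h2 : HasDerivAt (fun t : ℝ => t^2) (2*z) z := by
        simpa using hasDerivAt_pow 2 z
      have h1 : HasDerivAt (fun t : ℝ => t) 1 z := hasDerivAt_id z
      have h := (((h2.const_mul (3*q3)).add (h1.const_mul (2*q2))).add_const q1).div_const 4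
      refine h.congr_deriv ?_
      ring
    have h1 : HasDerivAt (fun t : ℝ => 1 + x*t) x z := by
      simpa using ((hasDerivAt_id z).const_mul x).const_add 1
    have hden : HasDerivAt (fun t : ℝ => 4*(1+x*t)^2) (4*(2*(1+x*z)^1*x)) z := by
      have h2 := (h1.pow 2).const_mul 4
      refine h2.congr_deriv ?_
      norm_num
    have hden0 : (4:ℝ)*(1+x*z)^2 ≠ 0 := mul_ne_zero (by norm_num) (pow_ne_zero 2 huz)
    have hfrac : HasDerivAt (fun t : ℝ => c*x/(4*(1+x*t)^2))
        ((0 * (4*(1+x*z)^2) - c*x * (4*(2*(1+x*z)^1*x))) / (4*(1+x*z)^2)^2) z :=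
      (hasDerivAt_const z (c*x)).div hden hden0
    have h := hpoly.sub hfrac
    refine h.congr_deriv ?_
    field_simp
    ring
  have key : deriv (deriv F) z = (6*q3*z + 2*q2)/4 + c*x^2/(2*(1+x*z)^3) := by
    rw [hdF.deriv_eq]
    exact hder2.deriv
  rw [key, hr1, hr2, hc, hq3, hq2]
  field_simp
  ring
end

section
/- For all real $x_1, x_2$ with $0 < |x_1| < 1$ and $0 < |x_2| < 1$, the quantity $-4x_1^2 - x_1 x_2 - x_1^3 x_2 - 4x_2^2 + 8x_1^2 x_2^2 - x_1 x_2^3 + 3x_1^3 x_2^3$ is strictly negative. -/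
theorem stmt_10 (x1 x2 : ℝ) (h1 : 0 < |x1|) (h1' : |x1| < 1) (h2 : 0 < |x2|) (h2' : |x2| < 1) :
    -4*x1^2 - x1*x2 - x1^3*x2 - 4*x2^2 + 8*x1^2*x2^2 - x1*x2^3 + 3*x1^3*x2^3 < 0 := by
  have hx1 : x1 ≠ 0 := fun h => by simp [h] at h1
  have hx2 : x2 ≠ 0 := fun h => by simp [h] at h2
  have h1sq : x1^2 < 1 := by rw [← sq_abs]; nlinarith
  have h2sq : x2^2 < 1 := by rw [← sq_abs]; nlinarith
  have p1 : 0 < x1^2 := by positivity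
  have p2 : 0 < x2^2 := by positivity
  have hkey : 0 < (1 - x1^2) * (1 - x2^2) := by nlinarith
  rcases le_or_gt 0 (x1*x2) with hs | hs
  · nlinarith [sq_nonneg (x1 - x2), sq_nonneg (x1 + x2), mul_nonneg hs hs,
      mul_nonneg hs hkey.le, mul_nonneg (mul_nonneg hs hs) hs,
      mul_nonneg hs (sq_nonneg (x1 - x2)), mul_pos p1 p2,
      mul_nonneg hs (mul_nonneg hs (sq_nonneg (x1*x2)))]
  · nlinarith [sq_nonneg (x1 - x2), sq_nonneg (x1 + x2),
      mul_pos (neg_pos.mpr hs) hkey,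
      mul_nonneg (neg_nonneg.mpr hs.le) (sq_nonneg (x1 + x2)),
      mul_pos p1 p2, mul_pos (mul_pos (neg_pos.mpr hs) (neg_pos.mpr hs)) (neg_pos.mpr hs),
      mul_nonneg (mul_nonneg (neg_nonneg.mpr hs.le) (neg_nonneg.mpr hs.le)) hkey.le]
end

section
/- Let $x_1, x_2 \in (0,1)$ and $s_1, s_2 \in \mathbb{R}$ with $s_1 x_1 < 2$ and $s_2 x_2 < 2$. Then $\kappa_2 := \frac{2(1-x_1^2)^2(1-x_2^2)^2(6(x_1+x_2) - 3(s_1 x_1^2 + s_2 x_2^2) + (s_1+s_2)x_1^2 x_2^2)}{3(x_1+x_2)(-4x_1^2 - x_1 x_2 - x_1^3 x_2 - 4x_2^2 + 8x_1^2 x_2^2 - x_1 x_2^3 + 3x_1^3 x_2^3)} \le 0$. -/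
theorem stmt_11 (x1 x2 s1 s2 : ℝ)
    (hx1 : x1 ∈ Set.Ioo (0 : ℝ) 1) (hx2 : x2 ∈ Set.Ioo (0 : ℝ) 1)
    (hs1 : s1 * x1 < 2) (hs2 : s2 * x2 < 2) :
    2*(1 - x1^2)^2*(1 - x2^2)^2*(6*(x1 + x2) - 3*(s1*x1^2 + s2*x2^2) + (s1 + s2)*x1^2*x2^2)
      / (3*(x1 + x2)*(-4*x1^2 - x1*x2 - x1^3*x2 - 4*x2^2 + 8*x1^2*x2^2 - x1*x2^3 + 3*x1^3*x2^3))
      ≤ 0 := by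
  obtain ⟨h1, h1'⟩ := hx1
  obtain ⟨h2, h2'⟩ := hx2
  have e1 : 0 < 2*x1 - s1*x1^2 := by nlinarith
  have e2 : 0 < 2*x2 - s2*x2^2 := by nlinarith
  have t1 : (0:ℝ) < 3 - x2^2 := by nlinarith
  have t2 : (0:ℝ) < 3 - x1^2 := by nlinarith
  have hN : 0 < 6*(x1 + x2) - 3*(s1*x1^2 + s2*x2^2) + (s1 + s2)*x1^2*x2^2 := by
    nlinarith [mul_pos e1 t1, mul_pos e2 t2, mul_pos (mul_pos h1 h2) h2,
      mul_pos (mul_pos h1 h1) h2]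
  have hnum : 0 ≤ 2*(1 - x1^2)^2*(1 - x2^2)^2*(6*(x1 + x2) - 3*(s1*x1^2 + s2*x2^2) + (s1 + s2)*x1^2*x2^2) := by
    have : (0:ℝ) ≤ 2*(1 - x1^2)^2*(1 - x2^2)^2 := by positivity
    exact mul_nonneg this hN.le
  have hD : (-4*x1^2 - x1*x2 - x1^3*x2 - 4*x2^2 + 8*x1^2*x2^2 - x1*x2^3 + 3*x1^3*x2^3) < 0 := by
    have q1 : (0:ℝ) < 1 - x1^2 := by nlinarith
    have q2 : (0:ℝ) < 1 - x2^2 := by nlinarith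
    have p1 : 0 < x1^2 * (1 - x2^2) := mul_pos (pow_pos h1 2) q2
    have p2 : 0 < x2^2 * (1 - x1^2) := mul_pos (pow_pos h2 2) q1
    have p3 : 0 < x1*x2 * (1 - x1^2*x2^2) := by nlinarith [mul_pos h1 h2, sq_nonneg (x1*x2)]
    have p4 : 0 < x1*x2 * (x1^2 * (1 - x2^2)) := mul_pos (mul_pos h1 h2) p1
    have p5 : 0 < x1*x2 * (x2^2 * (1 - x1^2)) := mul_pos (mul_pos h1 h2) p2
    nlinarith [p1, p2, p3, p4, p5]
  have hden : 3*(x1 + x2)*(-4*x1^2 - x1*x2 - x1^3*x2 - 4*x2^2 + 8*x1^2*x2^2 - x1*x2^3 + 3*x1^3*x2^3) ≤ 0 := by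
    have hx : 0 < 3*(x1+x2) := by linarith
    nlinarith [mul_pos hx (neg_pos.mpr hD)]
  exact div_nonpos_iff.mpr (Or.inl ⟨hnum, hden⟩)
end

section
/- For $x_1 = 1/2$, $s_1 = 2$, $s_2 = -2$, and $x \in (-1,0)$ with $x \neq -1/2$, the unique solution of the associated linear system gives $\kappa_1 = \frac{6(x-2)(3+2x+7x^2)}{8+5x+16x^2+x^3}$ and $\kappa_2 = \frac{-9(1-x)^2(1+x)^2(1+2x)}{8+5x+16x^2+x^3}$; moreover, for $-1 < x < -1/2$ one has $\kappa_2 > 0$. -/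
theorem stmt_12 (x : ℝ) (hx : x ∈ Set.Ioo (-1 : ℝ) 0) (hxne : x ≠ -1/2) :
    (∀ κ1 κ2 : ℝ,
      ((1 + (1/2)*x/3) * κ1
        + ((1/2)^3*x^3 + 2*(1/2)^2*x^2 - (1/2)^2 - (1/2)*x - x^2)
            / ((1 - (1/2)^2)^2 * (1 - x^2)^2) * κ2
        = -2*(1 + (1/2)*x) - 2*(2*(1/2) + (-2)*x)) →
      ((1 + (1/2)*x/3 - ((1/2) + x)/3) * κ1
        + ((1/2)^3*x^3 + 2*(1/2)^2*x^2 - (1/2)^2 - (1/2)*x - x^2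
            + ((1/2) + x)*(2*(1/2)^2*x^2 - (1/2)^2 - x^2))
            / ((1 - (1/2)^2)^2 * (1 - x^2)^2) * κ2
        = -2*(1 + (1/2)*x - ((1/2) + x)) - 2*(2*(1/2) + (-2)*x) + 2/3*(2 + (-2))*(1/2)*x) →
      κ1 = 6*(x - 2)*(3 + 2*x + 7*x^2) / (8 + 5*x + 16*x^2 + x^3) ∧
      κ2 = -9*(1 - x)^2*(1 + x)^2*(1 + 2*x) / (8 + 5*x + 16*x^2 + x^3)) ∧
    (x < -1/2 → 0 < -9*(1 - x)^2*(1 + x)^2*(1 + 2*x) / (8 + 5*x + 16*x^2 + x^3)) := by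
  obtain ⟨hl, hr⟩ := hx
  have hm : (0:ℝ) < 1 - x^2 := by nlinarith
  have hD : (0:ℝ) < 8 + 5*x + 16*x^2 + x^3 := by nlinarith [sq_nonneg (x+1), sq_nonneg x, sq_nonneg (x+1/4)]
  have h2x : (1 + 2*x) ≠ 0 := by
    intro h; apply hxne; linarith
  have hM : ((1 + 2*x) * ((9/16)*(1 - x^2)^2)) ≠ 0 := by
    apply mul_ne_zero h2x
    positivity
  constructor
  · intro κ1 κ2 h1 h2
    have H1 : (1 + x/6) * κ1 * ((9/16)*(1 - x^2)^2)
        + (-1/4 - x/2 - x^2/2 + x^3/8) * κ2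
        = (-4 + 3*x) * ((9/16)*(1 - x^2)^2) := by
      field_simp at h1 ⊢
      linarith [h1]
    have H2 : (5/6 - x/6) * κ1 * ((9/16)*(1 - x^2)^2)
        + (-3/8 - 3/4*x - 3/4*x^2 - 3/8*x^3) * κ2
        = (-3 + 5*x) * ((9/16)*(1 - x^2)^2) := by
      field_simp at h2 ⊢
      linarith [h2]
    have key1 : (κ1 * (8 + 5*x + 16*x^2 + x^3)) * ((1 + 2*x) * ((9/16)*(1 - x^2)^2))
        = (6*(x - 2)*(3 + 2*x + 7*x^2)) * ((1 + 2*x) * ((9/16)*(1 - x^2)^2)) := by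
      linear_combination (-48*(-3/8 - 3/4*x - 3/4*x^2 - 3/8*x^3)) * H1
        + (48*(-1/4 - x/2 - x^2/2 + x^3/8)) * H2
    have key2 : (κ2 * (8 + 5*x + 16*x^2 + x^3)) * ((1 + 2*x) * ((9/16)*(1 - x^2)^2))
        = (-9*(1 - x)^2*(1 + x)^2*(1 + 2*x)) * ((1 + 2*x) * ((9/16)*(1 - x^2)^2)) := by
      linear_combination (48*(5/6 - x/6)*((9/16)*(1 - x^2)^2)) * H1
        + (-48*(1 + x/6)*((9/16)*(1 - x^2)^2)) * H2
    constructor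
    · rw [eq_div_iff hD.ne']
      exact mul_right_cancel₀ hM key1
    · rw [eq_div_iff hD.ne']
      exact mul_right_cancel₀ hM key2
  · intro hlt
    apply div_pos _ hD
    have hsq : (0:ℝ) < (3*(1 - x)*(1 + x))^2 := by
      apply pow_pos
      nlinarith
    have hneg : (0:ℝ) < -(1 + 2*x) := by linarith
    have heq : -9*(1 - x)^2*(1 + x)^2*(1 + 2*x) = (3*(1 - x)*(1 + x))^2 * (-(1 + 2*x)) := by
      ring
    rw [heq]
    exact mul_pos hsq hneg
end

section
/- Define $P(t) = \frac{-57636 - 396428t + 431692t^2 + 369508t^3 - 304629t^4 - 150804t^5 + 60291t^6 + 25839t^7}{3284(2+t)^2(4-3t)^2}$. Then $P(-1) > 0$, $P(1) < 0$, $\int_{-1}^{1} P(t)\,dt = 0$, and $P$ changes sign exactly once on $(-1,1)$; consequently $F(z) = \int_{-1}^{z} P(t)\,dt > 0$ for all $z \in (-1,1)$. -/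
noncomputable section

/-- numerator polynomial -/
def Q13 (t : ℝ) : ℝ := -57636 - 396428*t + 431692*t^2 + 369508*t^3 - 304629*t^4 - 150804*t^5
        + 60291*t^6 + 25839*t^7

/-- denominator -/
def D13 (t : ℝ) : ℝ := 3284*(2 + t)^2*(4 - 3*t)^2

/-- antiderivative -/
def G13 (t : ℝ) : ℝ :=
  (-873*t - 3274*t^2 + 957*t^3 + (2871/4)*t^4 - (441/5)/(2+t) - (1323/5)/(4-3*t)) / 3284

lemma Q13_cont : Continuous Q13 := by unfold Q13; fun_prop

lemma D13_cont : Continuous D13 := by unfold D13; fun_prop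

lemma D13_pos {t : ℝ} (h1 : -1 ≤ t) (h2 : t ≤ 1) : 0 < D13 t := by
  have a : (0:ℝ) < 2 + t := by linarith
  have b : (0:ℝ) < 4 - 3*t := by linarith
  unfold D13; positivity

/-- Bernstein positivity: Q13 > 0 on [-1,-1/2] -/
lemma Q13_pos_left {t : ℝ} (h1 : -1 ≤ t) (h2 : t ≤ -(1/2 : ℝ)) : 0 < Q13 t := by
  have ha : (0:ℝ) ≤ t + 1 := by linarith
  have hb : (0:ℝ) ≤ -(1/2:ℝ) - t := by linarith
  unfold Q13
  nlinarith [mul_nonneg (pow_nonneg ha 0) (pow_nonneg hb 7),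
    mul_nonneg (pow_nonneg ha 1) (pow_nonneg hb 6),
    mul_nonneg (pow_nonneg ha 2) (pow_nonneg hb 5),
    mul_nonneg (pow_nonneg ha 3) (pow_nonneg hb 4),
    mul_nonneg (pow_nonneg ha 4) (pow_nonneg hb 3),
    mul_nonneg (pow_nonneg ha 5) (pow_nonneg hb 2),
    mul_nonneg (pow_nonneg ha 6) (pow_nonneg hb 1),
    mul_nonneg (pow_nonneg ha 7) (pow_nonneg hb 0)]

/-- Bernstein negativity: Q13 < 0 on [0,1] -/
lemma Q13_neg_right {t : ℝ} (h1 : (0:ℝ) ≤ t) (h2 : t ≤ 1) : Q13 t < 0 := by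
  have hb : (0:ℝ) ≤ 1 - t := by linarith
  unfold Q13
  nlinarith [mul_nonneg (pow_nonneg h1 0) (pow_nonneg hb 7),
    mul_nonneg (pow_nonneg h1 1) (pow_nonneg hb 6),
    mul_nonneg (pow_nonneg h1 2) (pow_nonneg hb 5),
    mul_nonneg (pow_nonneg h1 3) (pow_nonneg hb 4),
    mul_nonneg (pow_nonneg h1 4) (pow_nonneg hb 3),
    mul_nonneg (pow_nonneg h1 5) (pow_nonneg hb 2),
    mul_nonneg (pow_nonneg h1 6) (pow_nonneg hb 1),
    mul_nonneg (pow_nonneg h1 7) (pow_nonneg hb 0)]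

lemma Q13_hasDeriv (x : ℝ) : HasDerivAt Q13
    (-396428 + 863384*x + 1108524*x^2 - 1218516*x^3 - 754020*x^4 + 361746*x^5 + 180873*x^6) x := by
  have hid := hasDerivAt_id x
  have p1 : HasDerivAt (fun t : ℝ => 396428*t) 396428 x := by simpa using hid.const_mul (396428:ℝ)
  have p2 : HasDerivAt (fun t : ℝ => 431692*t^2) (431692*(2*x)) x := by
    have := (hasDerivAt_pow 2 x).const_mul (431692:ℝ); exact this.congr_deriv (by push_cast; ring)
  have p3 : HasDerivAt (fun t : ℝ => 369508*t^3) (369508*(3*x^2)) x := by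
    have := (hasDerivAt_pow 3 x).const_mul (369508:ℝ); exact this.congr_deriv (by push_cast; ring)
  have p4 : HasDerivAt (fun t : ℝ => 304629*t^4) (304629*(4*x^3)) x := by
    have := (hasDerivAt_pow 4 x).const_mul (304629:ℝ); exact this.congr_deriv (by push_cast; ring)
  have p5 : HasDerivAt (fun t : ℝ => 150804*t^5) (150804*(5*x^4)) x := by
    have := (hasDerivAt_pow 5 x).const_mul (150804:ℝ); exact this.congr_deriv (by push_cast; ring)
  have p6 : HasDerivAt (fun t : ℝ => 60291*t^6) (60291*(6*x^5)) x := by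
    have := (hasDerivAt_pow 6 x).const_mul (60291:ℝ); exact this.congr_deriv (by push_cast; ring)
  have p7 : HasDerivAt (fun t : ℝ => 25839*t^7) (25839*(7*x^6)) x := by
    have := (hasDerivAt_pow 7 x).const_mul (25839:ℝ); exact this.congr_deriv (by push_cast; ring)
  have h := (((((((hasDerivAt_const x (-57636:ℝ)).sub p1).add p2).add p3).sub p4).sub p5).add
    p6).add p7
  have h2 : HasDerivAt Q13
      (0 - 396428 + 431692*(2*x) + 369508*(3*x^2) - 304629*(4*x^3) - 150804*(5*x^4)
        + 60291*(6*x^5) + 25839*(7*x^6)) x := h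
  convert h2 using 1; ring

/-- Bernstein negativity of Q13' on [-1/2, 0] -/
lemma Q13d_neg {x : ℝ} (h1 : -(1/2:ℝ) ≤ x) (h2 : x ≤ 0) :
    (-396428 + 863384*x + 1108524*x^2 - 1218516*x^3 - 754020*x^4 + 361746*x^5 + 180873*x^6 : ℝ)
      < 0 := by
  have ha : (0:ℝ) ≤ x + 1/2 := by linarith
  have hb : (0:ℝ) ≤ -x := by linarith
  nlinarith [mul_nonneg (pow_nonneg ha 0) (pow_nonneg hb 6),
    mul_nonneg (pow_nonneg ha 1) (pow_nonneg hb 5),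
    mul_nonneg (pow_nonneg ha 2) (pow_nonneg hb 4),
    mul_nonneg (pow_nonneg ha 3) (pow_nonneg hb 3),
    mul_nonneg (pow_nonneg ha 4) (pow_nonneg hb 2),
    mul_nonneg (pow_nonneg ha 5) (pow_nonneg hb 1),
    mul_nonneg (pow_nonneg ha 6) (pow_nonneg hb 0)]

lemma Q13_anti : StrictAntiOn Q13 (Set.Icc (-(1/2:ℝ)) 0) := by
  apply strictAntiOn_of_deriv_neg (convex_Icc _ _) Q13_cont.continuousOn
  intro x hx
  rw [interior_Icc] at hx
  rw [(Q13_hasDeriv x).deriv]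
  exact Q13d_neg hx.1.le hx.2.le

lemma G13_hasDeriv (x : ℝ) (h2 : (2:ℝ) + x ≠ 0) (h4 : (4:ℝ) - 3*x ≠ 0) :
    HasDerivAt G13 (Q13 x / D13 x) x := by
  have hid := hasDerivAt_id x
  have e1 : HasDerivAt (fun t : ℝ => 2 + t) 1 x := by
    exact hid.const_add (2:ℝ)
  have e2 : HasDerivAt (fun t : ℝ => 4 - 3*t) (-3) x := by
    exact ((hid.const_mul (3:ℝ)).const_sub (4:ℝ)).congr_deriv (by ring)
  have p1 : HasDerivAt (fun t : ℝ => -873*t) (-873) x := by simpa using hid.const_mul (-873:ℝ)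
  have p2 : HasDerivAt (fun t : ℝ => 3274*t^2) (3274*(2*x)) x := by
    have := (hasDerivAt_pow 2 x).const_mul (3274:ℝ); exact this.congr_deriv (by push_cast; ring)
  have p3 : HasDerivAt (fun t : ℝ => 957*t^3) (957*(3*x^2)) x := by
    have := (hasDerivAt_pow 3 x).const_mul (957:ℝ); exact this.congr_deriv (by push_cast; ring)
  have p4 : HasDerivAt (fun t : ℝ => (2871/4)*t^4) ((2871/4)*(4*x^3)) x := by
    have := (hasDerivAt_pow 4 x).const_mul ((2871:ℝ)/4); exact this.congr_deriv (by push_cast; ring)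
  have p5 : HasDerivAt (fun t : ℝ => (441/5)/(2+t))
      ((0*(2+x) - (441/5)*1)/(2+x)^2) x := (hasDerivAt_const x ((441:ℝ)/5)).div e1 h2
  have p6 : HasDerivAt (fun t : ℝ => (1323/5)/(4-3*t))
      ((0*(4-3*x) - (1323/5)*(-3))/(4-3*x)^2) x := (hasDerivAt_const x ((1323:ℝ)/5)).div e2 h4
  have h := (((((p1.sub p2).add p3).add p4).sub p5).sub p6).div_const (3284:ℝ)
  have h' : HasDerivAt G13
      ((-873 - 3274*(2*x) + 957*(3*x^2) + (2871/4)*(4*x^3) - (0*(2+x) - (441/5)*1)/(2+x)^2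
        - (0*(4-3*x) - (1323/5)*(-3))/(4-3*x)^2) / 3284) x := h
  convert h' using 1
  unfold Q13 D13
  have h4' : (4:ℝ) - x*3 ≠ 0 := by rwa [mul_comm]
  field_simp
  ring

theorem stmt_13 (P : ℝ → ℝ)
    (hP : ∀ t : ℝ, P t =
      (-57636 - 396428*t + 431692*t^2 + 369508*t^3 - 304629*t^4 - 150804*t^5
        + 60291*t^6 + 25839*t^7) / (3284*(2 + t)^2*(4 - 3*t)^2)) :
    0 < P (-1) ∧ P 1 < 0 ∧ (∫ t in (-1 : ℝ)..1, P t) = 0 ∧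
    (∃ c ∈ Set.Ioo (-1 : ℝ) 1,
      (∀ t ∈ Set.Ico (-1 : ℝ) c, 0 < P t) ∧ (∀ t ∈ Set.Ioc c 1, P t < 0)) ∧
    (∀ z ∈ Set.Ioo (-1 : ℝ) 1, 0 < ∫ t in (-1 : ℝ)..z, P t) := by
  have hPQ : ∀ t : ℝ, P t = Q13 t / D13 t := by
    intro t; rw [hP t]; rfl
  have hPfun : P = fun t => Q13 t / D13 t := funext hPQ
  -- FTC
  have hFTC : ∀ z : ℝ, -1 ≤ z → z ≤ 1 → (∫ t in (-1:ℝ)..z, P t) = G13 z - G13 (-1) := by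
    intro z hz1 hz2
    apply intervalIntegral.integral_eq_sub_of_hasDerivAt
    · intro x hx
      rw [Set.uIcc_of_le (by linarith : (-1:ℝ) ≤ z)] at hx
      obtain ⟨ha, hb⟩ := hx
      rw [hPQ x]
      exact G13_hasDeriv x (by linarith) (by nlinarith)
    · apply ContinuousOn.intervalIntegrable
      rw [hPfun, Set.uIcc_of_le (by linarith : (-1:ℝ) ≤ z)]
      apply ContinuousOn.div Q13_cont.continuousOn D13_cont.continuousOn
      intro x hx
      exact (D13_pos hx.1 (by linarith [hx.2])).ne'
  -- obtain the root c
  have hQhalf : 0 < Q13 (-(1/2:ℝ)) := Q13_pos_left (by norm_num) le_rfl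
  have hQ0 : Q13 0 < 0 := Q13_neg_right le_rfl (by norm_num)
  have hsub : Set.Ioo (Q13 0) (Q13 (-(1/2:ℝ))) ⊆ Q13 '' Set.Ioo (-(1/2:ℝ)) 0 :=
    intermediate_value_Ioo' (by norm_num) Q13_cont.continuousOn
  obtain ⟨c, hcmem, hQc⟩ := hsub ⟨hQ0, hQhalf⟩
  obtain ⟨hc1, hc2⟩ := hcmem
  -- sign of Q13 on the two sides
  have hQpos : ∀ t : ℝ, -1 ≤ t → t < c → 0 < Q13 t := by
    intro t ht1 ht2
    rcases le_or_gt t (-(1/2:ℝ)) with h | h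
    · exact Q13_pos_left ht1 h
    · have := Q13_anti ⟨h.le, by linarith⟩ ⟨hc1.le, hc2.le⟩ ht2
      rw [hQc] at this; linarith
  have hQneg : ∀ t : ℝ, c < t → t ≤ 1 → Q13 t < 0 := by
    intro t ht1 ht2
    rcases le_or_gt t 0 with h | h
    · have := Q13_anti ⟨hc1.le, hc2.le⟩ ⟨by linarith, h⟩ ht1
      rw [hQc] at this; linarith
    · exact Q13_neg_right h.le ht2
  have hcI : c ∈ Set.Ioo (-1:ℝ) 1 := ⟨by linarith, by linarith⟩
  -- monotonicity of G13
  have hGcont : ContinuousOn G13 (Set.Icc (-1:ℝ) 1) := by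
    intro x hx
    exact (G13_hasDeriv x (by linarith [hx.1]) (by nlinarith [hx.2])).continuousAt.continuousWithinAt
  have hGmono : StrictMonoOn G13 (Set.Icc (-1:ℝ) c) := by
    apply strictMonoOn_of_deriv_pos (convex_Icc _ _)
      (hGcont.mono (Set.Icc_subset_Icc le_rfl hcI.2.le))
    intro x hx
    rw [interior_Icc] at hx
    have hx1 : (-1:ℝ) < x := hx.1
    have hx2 : x < 1 := by linarith [hx.2]
    rw [(G13_hasDeriv x (by linarith) (by nlinarith)).deriv]
    exact div_pos (hQpos x hx1.le hx.2) (D13_pos hx1.le hx2.le)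
  have hGanti : StrictAntiOn G13 (Set.Icc c (1:ℝ)) := by
    apply strictAntiOn_of_deriv_neg (convex_Icc _ _)
      (hGcont.mono (Set.Icc_subset_Icc hcI.1.le le_rfl))
    intro x hx
    rw [interior_Icc] at hx
    have hx1 : (-1:ℝ) < x := by linarith [hx.1]
    have hx2 : x < 1 := hx.2
    rw [(G13_hasDeriv x (by linarith) (by nlinarith)).deriv]
    exact div_neg_of_neg_of_pos (hQneg x hx.1 hx2.le) (D13_pos hx1.le hx2.le)
  have hGval : G13 1 = G13 (-1) := by unfold G13; norm_num
  refine ⟨?_, ?_, ?_, ⟨c, hcI, ?_, ?_⟩, ?_⟩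
  · rw [hP]; norm_num
  · rw [hP]; norm_num
  · rw [hFTC 1 (by norm_num) le_rfl, hGval, sub_self]
  · intro t ht
    rw [hPQ t]
    exact div_pos (hQpos t ht.1 ht.2) (D13_pos ht.1 (by linarith [ht.2, hcI.2]))
  · intro t ht
    rw [hPQ t]
    exact div_neg_of_neg_of_pos (hQneg t ht.1 ht.2)
      (D13_pos (by linarith [ht.1, hcI.1]) ht.2)
  · intro z hz
    rw [hFTC z hz.1.le hz.2.le, sub_pos]
    rcases le_or_gt z c with h | h
    · exact hGmono ⟨le_rfl, hcI.1.le⟩ ⟨hz.1.le, h⟩ hz.1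
    · rw [← hGval]
      exact hGanti ⟨h.le, hz.2.le⟩ ⟨hcI.2.le, le_rfl⟩ hz.2

end
end

section
/- Define $P(t) = \frac{12636 - 120588t - 85289t^2 + 33646t^3 + 24982t^4 - 5012t^5 - 2033t^6 + 394t^7}{1962(3-t)^2(2+t)^2}$. Then $P(-1) > 0$, $P(1) < 0$, $\int_{-1}^1 P(t)\,dt = 0$, and $P$ has exactly one sign change in $(-1,1)$; hence $F(z) = \int_{-1}^{z} P(t)\,dt > 0$ for all $z \in (-1,1)$. -/
open Set

noncomputable def Fprof (z : ℝ) : ℝ :=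
  ((z^2 - 1) * (-20130 - 7567*z + 3323*z^2 + 1027*z^3 - 197*z^4)) / (3924*(3 - z)*(2 + z))

def Npoly (t : ℝ) : ℝ :=
  12636 - 120588*t - 85289*t^2 + 33646*t^3 + 24982*t^4 - 5012*t^5 - 2033*t^6 + 394*t^7

lemma Npoly_hasDeriv (t : ℝ) : HasDerivAt Npoly
    (-120588 - 170578*t + 100938*t^2 + 99928*t^3 - 25060*t^4 - 12198*t^5 + 2758*t^6) t := by
  unfold Npoly
  have h1 := hasDerivAt_id t
  have h2 := hasDerivAt_pow 2 t
  have h3 := hasDerivAt_pow 3 t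
  have h4 := hasDerivAt_pow 4 t
  have h5 := hasDerivAt_pow 5 t
  have h6 := hasDerivAt_pow 6 t
  have h7 := hasDerivAt_pow 7 t
  refine ((((((((hasDerivAt_const t (12636:ℝ)).sub (h1.const_mul 120588)).sub
    (h2.const_mul 85289)).add (h3.const_mul 33646)).add (h4.const_mul 24982)).sub
    (h5.const_mul 5012)).sub (h6.const_mul 2033)).add (h7.const_mul 394)).congr_deriv ?_
  push_cast
  ring

lemma Npoly_anti : StrictAntiOn Npoly (Icc (0:ℝ) 1) := by
  apply strictAntiOn_of_deriv_neg (convex_Icc 0 1)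
  · exact fun x _ => ((Npoly_hasDeriv x).continuousAt).continuousWithinAt
  · intro x hx
    rw [interior_Icc] at hx
    rw [(Npoly_hasDeriv x).deriv]
    obtain ⟨h0, h1⟩ := hx
    nlinarith [mul_nonneg h0.le h0.le, pow_nonneg h0.le 3, pow_nonneg h0.le 4,
      pow_nonneg h0.le 5, pow_nonneg h0.le 6,
      mul_nonneg (mul_nonneg h0.le h0.le) (sub_nonneg.mpr h1.le),
      mul_nonneg (pow_nonneg h0.le 3) (sub_nonneg.mpr h1.le),
      mul_nonneg (pow_nonneg h0.le 5) (sub_nonneg.mpr h1.le)]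

lemma Npoly_pos {t : ℝ} (h1 : -1 ≤ t) (h2 : t ≤ 0) : 0 < Npoly t := by
  unfold Npoly
  have hs : 0 ≤ -t := by linarith
  have h1t : 0 ≤ 1 + t := by linarith
  have h1mt2 : 0 ≤ 1 - t^2 := by nlinarith
  nlinarith [mul_nonneg hs h1t, mul_nonneg (sq_nonneg t) h1t,
    mul_nonneg (mul_nonneg (sq_nonneg t) (sq_nonneg t)) h1t,
    mul_nonneg (sq_nonneg t) h1mt2,
    mul_nonneg (mul_nonneg (sq_nonneg t) (sq_nonneg t)) h1mt2,
    mul_nonneg (pow_nonneg (sq_nonneg t) 3) h1t,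
    mul_nonneg (mul_nonneg (mul_nonneg (sq_nonneg t) (sq_nonneg t)) hs) h1t]

lemma den_pos {t : ℝ} (h1 : -1 ≤ t) (h2 : t ≤ 1) : 0 < 1962*(3 - t)^2*(2 + t)^2 := by
  have a : (0:ℝ) < 3 - t := by linarith
  have b : (0:ℝ) < 2 + t := by linarith
  positivity

lemma Fprof_hasDeriv {t : ℝ} (h1 : -1 ≤ t) (h2 : t ≤ 1) :
    HasDerivAt Fprof (Npoly t / (1962*(3 - t)^2*(2 + t)^2)) t := by
  have h3 : (0:ℝ) < 3 - t := by linarith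
  have h4 : (0:ℝ) < 2 + t := by linarith
  have hden : (3924*(3 - t)*(2 + t)) ≠ 0 := by positivity
  have hid := hasDerivAt_id t
  have hp2 := hasDerivAt_pow 2 t
  have hp3 := hasDerivAt_pow 3 t
  have hp4 := hasDerivAt_pow 4 t
  have hq : HasDerivAt (fun z : ℝ => -20130 - 7567*z + 3323*z^2 + 1027*z^3 - 197*z^4)
      (-7567 + 3323*(2*t) + 1027*(3*t^2) - 197*(4*t^3)) t := by
    refine (((((hasDerivAt_const t (-20130:ℝ)).sub (hid.const_mul 7567)).add
      (hp2.const_mul 3323)).add (hp3.const_mul 1027)).sub (hp4.const_mul 197)).congr_deriv ?_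
    push_cast; ring
  have hsq : HasDerivAt (fun z : ℝ => z^2 - 1) (2*t) t := by
    refine (hp2.sub_const 1).congr_deriv ?_; push_cast; ring
  have hnum := hsq.mul hq
  have hdfun : (fun z : ℝ => 3924*(3 - z)*(2 + z)) = fun z : ℝ => 23544 + 3924*z - 3924*z^2 := by
    funext z; ring
  have hd : HasDerivAt (fun z : ℝ => 3924*(3 - z)*(2 + z)) (3924 - 3924*(2*t)) t := by
    rw [hdfun]
    refine (((hasDerivAt_const t (23544:ℝ)).add (hid.const_mul 3924)).sub
      (hp2.const_mul 3924)).congr_deriv ?_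
    push_cast; ring
  have hF := hnum.div hd hden
  unfold Fprof
  refine hF.congr_deriv (Eq.symm ?_)
  rw [div_eq_div_iff (ne_of_gt (den_pos h1 h2)) (by positivity)]
  unfold Npoly
  simp only [Pi.mul_apply]
  ring

lemma Fprof_neg_one : Fprof (-1) = 0 := by norm_num [Fprof]

lemma Fprof_one : Fprof 1 = 0 := by norm_num [Fprof]

lemma integral_Fprof {z : ℝ} (h1 : -1 ≤ z) (h2 : z ≤ 1) :
    (∫ t in (-1:ℝ)..z, Npoly t / (1962*(3 - t)^2*(2 + t)^2)) = Fprof z := by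
  have hsub : uIcc (-1:ℝ) z ⊆ Icc (-1:ℝ) 1 := by
    rw [uIcc_of_le h1]; exact Icc_subset_Icc le_rfl h2
  have hcont : ContinuousOn (fun t : ℝ => Npoly t / (1962*(3 - t)^2*(2 + t)^2)) (uIcc (-1:ℝ) z) := by
    apply ContinuousOn.div
    · exact fun x _ => (Npoly_hasDeriv x).continuousAt.continuousWithinAt
    · fun_prop
    · intro x hx
      obtain ⟨a, b⟩ := hsub hx
      exact ne_of_gt (den_pos a b)
  rw [intervalIntegral.integral_eq_sub_of_hasDerivAt
    (fun x hx => Fprof_hasDeriv (hsub hx).1 (hsub hx).2) (hcont.intervalIntegrable)]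
  rw [Fprof_neg_one, sub_zero]

lemma Fprof_pos {z : ℝ} (h1 : -1 < z) (h2 : z < 1) : 0 < Fprof z := by
  unfold Fprof
  apply div_pos
  · have ha : z^2 - 1 < 0 := by nlinarith
    have hb : -20130 - 7567*z + 3323*z^2 + 1027*z^3 - 197*z^4 < 0 := by
      nlinarith [sq_nonneg z, sq_nonneg (z*z), pow_nonneg (sq_nonneg z) 2,
        mul_self_nonneg (1 - z), mul_self_nonneg (1 + z)]
    exact mul_pos_of_neg_of_neg ha hb
  · have a : (0:ℝ) < 3 - z := by linarith
    have b : (0:ℝ) < 2 + z := by linarith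
    positivity

theorem stmt_14 (P : ℝ → ℝ)
    (hP : ∀ t : ℝ, P t =
      (12636 - 120588*t - 85289*t^2 + 33646*t^3 + 24982*t^4 - 5012*t^5
        - 2033*t^6 + 394*t^7) / (1962*(3 - t)^2*(2 + t)^2)) :
    0 < P (-1) ∧ P 1 < 0 ∧ (∫ t in (-1 : ℝ)..1, P t) = 0 ∧
    (∃ c ∈ Set.Ioo (-1 : ℝ) 1,
      (∀ t ∈ Set.Ico (-1 : ℝ) c, 0 < P t) ∧ (∀ t ∈ Set.Ioc c 1, P t < 0)) ∧
    (∀ z ∈ Set.Ioo (-1 : ℝ) 1, 0 < ∫ t in (-1 : ℝ)..z, P t) := by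
  have hPN : ∀ t : ℝ, P t = Npoly t / (1962*(3 - t)^2*(2 + t)^2) := by
    intro t; rw [hP t]; rfl
  obtain rfl : P = fun t : ℝ => Npoly t / (1962*(3 - t)^2*(2 + t)^2) := funext hPN
  refine ⟨?_, ?_, ?_, ?_, ?_⟩
  · have := Npoly_pos (t := -1) (by norm_num) (by norm_num)
    exact div_pos this (den_pos (by norm_num) (by norm_num))
  · have hN1 : Npoly 1 < 0 := by norm_num [Npoly]
    exact div_neg_of_neg_of_pos hN1 (den_pos (by norm_num) (by norm_num))
  · have h := integral_Fprof (show (-1:ℝ) ≤ 1 by norm_num) le_rfl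
    simpa [Fprof_one] using h
  · -- sign change
    have hc : ∃ c ∈ Ioo (0:ℝ) (1/10), Npoly c = 0 := by
      have hcont : ContinuousOn Npoly (Icc (0:ℝ) (1/10)) :=
        fun x _ => (Npoly_hasDeriv x).continuousAt.continuousWithinAt

      have h0 : (0:ℝ) ∈ Ioo (Npoly (1/10)) (Npoly 0) := by
        constructor <;> norm_num [Npoly]
      have := intermediate_value_Ioo' (by norm_num : (0:ℝ) ≤ 1/10) hcont h0
      obtain ⟨c, hc, hceq⟩ := this
      exact ⟨c, hc, hceq⟩
    obtain ⟨c, ⟨hc0, hc1⟩, hNc⟩ := hc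
    refine ⟨c, ⟨by linarith, by linarith⟩, ?_, ?_⟩
    · intro t ⟨ht1, ht2⟩
      have hNt : 0 < Npoly t := by
        rcases le_or_gt t 0 with h | h
        · exact Npoly_pos ht1 h
        · have := Npoly_anti ⟨h.le, by linarith⟩ ⟨hc0.le, by linarith⟩ ht2
          rw [hNc] at this; exact this
      exact div_pos hNt (den_pos ht1 (by linarith))
    · intro t ⟨ht1, ht2⟩
      have hNt : Npoly t < 0 := by
        have := Npoly_anti ⟨hc0.le, by linarith⟩ ⟨by linarith, ht2⟩ ht1
        rw [hNc] at this; exact this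
      exact div_neg_of_neg_of_pos hNt (den_pos (by linarith) ht2)
  · intro z ⟨hz1, hz2⟩
    rw [integral_Fprof hz1.le hz2.le]
    exact Fprof_pos hz1 hz2
end

section
/- Let $k, k' \in \mathbb{Z}_{>0}$, $k_1 \in \mathbb{Z}$, $k_2 \in \mathbb{Z}\setminus\{0\}$, $s \in \mathbb{R}$ fixed with $sx < 2$ where $x = k/(k+k')$, and set $a = k_1$, $b = \frac{k_2(2k+k')k'}{k^2}$, $z = 2a$, $\frac{\alpha_1}{\alpha_0} = \frac{-(1-x^2)^2(2-sx)}{8b^2 x^4}$, $\frac{\alpha_2}{\alpha_0} = \frac{3b^2x^4(2+sx) - a^2(2-sx)(1-x^2)^2}{2b^2x^4}$. Then $\lim_{k' \to \infty}\left(1 - 4\frac{\alpha_2\alpha_1}{\alpha_0^2} + 8\frac{\alpha_1^2}{\alpha_0^2}|z|^2\right) = 1 + \frac{3}{k_2^2} + \frac{a^2}{k_2^4} > 0$; in particular, for $k'$ sufficiently large the quantity $1 - 4\frac{\alpha_2\alpha_1}{\alpha_0^2} + 8\frac{\alpha_1^2}{\alpha_0^2}|z|^2$ is positive. -/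
theorem stmt_19 (k : ℤ) (hk : 0 < k) (k1 k2 : ℤ) (hk2 : k2 ≠ 0) (s : ℝ)
    (x b r1 r2 Q : ℕ → ℝ) (a : ℝ) (ha : a = (k1 : ℝ))
    (hx : ∀ n : ℕ, x n = (k : ℝ) / ((k : ℝ) + (n : ℝ)))
    (hsx : ∀ n : ℕ, 0 < n → s * x n < 2)
    (hb : ∀ n : ℕ, b n = (k2 : ℝ) * (2*(k : ℝ) + (n : ℝ)) * (n : ℝ) / (k : ℝ)^2)
    (hr1 : ∀ n : ℕ, r1 n = -(1 - (x n)^2)^2 * (2 - s * x n) / (8 * (b n)^2 * (x n)^4))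
    (hr2 : ∀ n : ℕ, r2 n =
      (3 * (b n)^2 * (x n)^4 * (2 + s * x n) - a^2 * (2 - s * x n) * (1 - (x n)^2)^2)
        / (2 * (b n)^2 * (x n)^4))
    (hQ : ∀ n : ℕ, Q n = 1 - 4 * (r2 n) * (r1 n) + 8 * (r1 n)^2 * |2*a|^2) :
    Filter.Tendsto Q Filter.atTop
      (nhds (1 + 3/(k2 : ℝ)^2 + a^2/(k2 : ℝ)^4)) ∧
    0 < 1 + 3/(k2 : ℝ)^2 + a^2/(k2 : ℝ)^4 ∧
    (∀ᶠ n in Filter.atTop, 0 < Q n) := by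
  have hkR : (0 : ℝ) < (k : ℝ) := by exact_mod_cast hk
  have hk2R : ((k2 : ℝ)) ≠ 0 := by exact_mod_cast hk2
  set K := (k2 : ℝ)
  -- the limit function
  set f : ℝ → ℝ := fun t =>
    1 + (3*K^2*(2+s*t) - a^2*(2-s*t)) * (2-s*t) * (4*K^4)⁻¹
      + (2-s*t)^2 * (2*a)^2 * (8*K^4)⁻¹ with hf
  have hcont : Continuous f := by fun_prop
  have hx0 : Filter.Tendsto x Filter.atTop (nhds 0) := by
    have hden : Filter.Tendsto (fun n : ℕ => (k : ℝ) + (n : ℝ)) Filter.atTop Filter.atTop :=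
      Filter.tendsto_atTop_add_const_left _ _ tendsto_natCast_atTop_atTop
    have := Filter.Tendsto.div_atTop (tendsto_const_nhds (x := (k : ℝ))) hden
    exact this.congr (fun n => (hx n).symm)
  have hQeq : ∀ n : ℕ, 1 ≤ n → Q n = f (x n) := by
    intro n hn
    have hnR : (0 : ℝ) < (n : ℝ) := by exact_mod_cast hn
    have hkn : (0 : ℝ) < (k : ℝ) + (n : ℝ) := by linarith
    have hxpos : 0 < x n := by rw [hx n]; positivity
    have hxlt : x n < 1 := by
      rw [hx n, div_lt_one hkn]; linarith
    have h1x : (1 : ℝ) - (x n)^2 ≠ 0 := by nlinarith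
    -- key identity : b n * (x n)^2 = K * (1 - (x n)^2)
    have hkey : b n * (x n)^2 = K * (1 - (x n)^2) := by
      rw [hb n, hx n]
      field_simp
      ring
    have hbx : (b n)^2 * (x n)^4 = K^2 * (1 - (x n)^2)^2 := by
      have : (b n)^2 * (x n)^4 = (b n * (x n)^2)^2 := by ring
      rw [this, hkey]; ring
    have hr1' : r1 n = -(2 - s * x n) / (8 * K^2) := by
      rw [hr1 n]
      rw [show 8 * (b n)^2 * (x n)^4 = 8 * ((b n)^2 * (x n)^4) by ring, hbx]
      field_simp
    have hr2' : r2 n = (3*K^2*(2+s*x n) - a^2*(2-s*x n)) / (2*K^2) := by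
      rw [hr2 n]
      rw [show 2 * (b n)^2 * (x n)^4 = 2 * ((b n)^2 * (x n)^4) by ring, hbx]
      rw [show 3 * (b n)^2 * (x n)^4 * (2 + s * x n)
          = 3 * ((b n)^2 * (x n)^4) * (2 + s * x n) by ring, hbx]
      field_simp
    rw [hQ n, hr1', hr2', hf]
    have habs : |2*a|^2 = (2*a)^2 := sq_abs _
    rw [habs]
    field_simp
    ring
  have hf0 : f 0 = 1 + 3/K^2 + a^2/K^4 := by
    rw [hf]
    field_simp
    ring
  have hlim : Filter.Tendsto Q Filter.atTop (nhds (1 + 3/K^2 + a^2/K^4)) := by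
    have h1 : Filter.Tendsto (fun n => f (x n)) Filter.atTop (nhds (f 0)) :=
      (hcont.tendsto 0).comp hx0
    rw [hf0] at h1
    refine h1.congr' ?_
    filter_upwards [Filter.eventually_ge_atTop 1] with n hn
    exact (hQeq n hn).symm
  have hpos : 0 < 1 + 3/K^2 + a^2/K^4 := by positivity
  refine ⟨hlim, hpos, ?_⟩
  exact hlim.eventually (eventually_gt_nhds hpos)
end
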